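/- arXiv:2411.03525 — 4 statements merged into one kernel-verified Lean document; each statement's English description precedes it below -/
import Mathlib

section
/- Let p, m ≥ 1 be natural numbers and q_1,…,q_m integers each coprime to p. For every k ∈ {0,1,…,p−1} and every n ∈ ℕ, the number of congruence-lattice points of 1-norm k+np satisfies N_𝓛(k+np) = Σ_{t=0}^{m−1} Σ_{U ⊆ M} binom(n−t+|U|−1, m−1) · γ(U, k+tp), where binom(a,b) denotes the binomial coefficient 'a choose b', understood to be 0 whenever a < b or a < 0 (with a = n−t+|U|−1 computed in ℤ). -/
/-- `OmegaSet p q U k` is the set `Ω(U,k)` of integer vectors supported on `U`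
satisfying the congruence `∑ i ∈ U, q i * x i ≡ 0 (mod p)` with 1-norm `k`. -/
def OmegaSet (p : ℕ) {m : ℕ} (q : Fin m → ℤ) (U : Finset (Fin m)) (k : ℕ) :
    Set (Fin m → ℤ) :=
  {x | (∀ i, i ∉ U → x i = 0) ∧ (p : ℤ) ∣ ∑ i ∈ U, q i * x i ∧
    ∑ i ∈ U, (x i).natAbs = k}

/-- `CSet p q U k` is the set `C(U,k)` of points of `Ω(U,k)` with all coordinates
of absolute value less than `p`. -/
def CSet (p : ℕ) {m : ℕ} (q : Fin m → ℤ) (U : Finset (Fin m)) (k : ℕ) :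
    Set (Fin m → ℤ) :=
  {x ∈ OmegaSet p q U k | ∀ i ∈ U, |x i| < (p : ℤ)}

/-- `OmegaN p q N k n` is the set `Ω_N(k+np)` of points of `Ω(M,k+np)` whose
coordinate `x i` is a negative multiple of `p` exactly when `i ∈ N`. -/
def OmegaN (p : ℕ) {m : ℕ} (q : Fin m → ℤ) (N : Finset (Fin m)) (k n : ℕ) :
    Set (Fin m → ℤ) :=
  {x ∈ OmegaSet p q Finset.univ (k + n * p) |
    ∀ i, (x i < 0 ∧ (p : ℤ) ∣ x i) ↔ i ∈ N}

/-- The signed reduction `x̄` of an integer modulo `p`: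
`x mod p` if `x ≥ 0` and `(x mod p) - p` if `x < 0`. -/
def sred (p : ℕ) (x : ℤ) : ℤ := if 0 ≤ x then x % (p : ℤ) else x % (p : ℤ) - p

/-- Binomial coefficient `a choose b` with upper argument in `ℤ`,
equal to `0` when `a < 0` (and, via `Nat.choose`, when `a < b`). -/
def ibinom (a : ℤ) (b : ℕ) : ℕ := if 0 ≤ a then a.toNat.choose b else 0


/-!
Every integer `z` has a unique signed base-`p` splitting: if `z` is not a negative multiple of
`p`, then `z = c + sgn(c) p w` with `c = sred p z`, `|c| < p`, `w ∈ ℕ` (reading `sgn 0 = +`);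
otherwise `z = -p (w + 1)`. Splitting every coordinate of `x ∈ Ω(M, k + n p)` this way gives
the set `U` of coordinates of the first kind, a residue vector `c` supported on `U` which still
satisfies the congruence (it agrees with `x` mod `p`), and a vector `w ∈ ℕ^M`, with
`‖x‖₁ = ‖c‖₁ + p (∑ w + |M \ U|)`. As `‖c‖₁ ≤ (p - 1)|U| < p m` and `‖c‖₁ ≡ k (mod p)`, we get
`‖c‖₁ = k + t p` for a unique `t < m`, so `c ∈ C(U, k + t p)`, and `w` runs over the
`ℕ`-vectors with `∑ w = n - t - (m - |U|)`; by stars and bars there are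
`binom(n - t + |U| - 1, m - 1)` of these.
-/

open Finset

lemma eq_add_div_mul_and_add_div_eq {p k n s a : ℕ} (hk : k < p) (h : s + p * a = k + n * p) :
    s = k + s / p * p ∧ a + s / p = n := by
  have hmod : s % p = k := by
    have := congrArg (· % p) h
    simpa [Nat.add_mul_mod_self_left, Nat.add_mul_mod_self_right, Nat.mod_eq_of_lt hk] using this
  have hs : s = k + s / p * p := by
    rw [← hmod, mul_comm]
    exact (Nat.mod_add_div s p).symm
  refine ⟨hs, Nat.eq_of_mul_eq_mul_left (by omega : 0 < p) ?_⟩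
  nlinarith

section Digits

variable {p : ℕ} {c z : ℤ} {w : ℕ}

def liftDigit (p : ℕ) (c : ℤ) (w : ℕ) : ℤ := if c < 0 then c - p * w else c + p * w

def quotDigit (p : ℕ) (z : ℤ) : ℕ := (if 0 ≤ z then z / p else -(z / p) - 1).toNat

lemma natAbs_liftDigit : (liftDigit p c w).natAbs = c.natAbs + p * w := by
  have : ((p * w : ℕ) : ℤ) = p * w := by push_cast; ring
  unfold liftDigit
  split_ifs <;> omega

lemma dvd_liftDigit_sub : (p : ℤ) ∣ liftDigit p c w - c := by
  unfold liftDigit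
  split_ifs
  · exact ⟨-w, by ring⟩
  · exact ⟨w, by ring⟩

lemma sred_liftDigit_and_quotDigit_liftDigit (hc : |c| < p) :
    sred p (liftDigit p c w) = c ∧ quotDigit p (liftDigit p c w) = w := by
  have hp : (0 : ℤ) < p := (abs_nonneg c).trans_lt hc
  have hpw : (0 : ℤ) ≤ p * w := by positivity
  rw [abs_lt] at hc
  unfold liftDigit sred quotDigit
  split_ifs
  · omega
  · obtain ⟨hq, hr⟩ := (Int.ediv_emod_unique (a := c - p * w) (r := c + p) (q := -(w + 1)) hp).2
      ⟨by ring, by omega, by omega⟩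
    rw [hq, hr]; omega
  · obtain ⟨hq, hr⟩ := (Int.ediv_emod_unique (a := c + p * w) (r := c) (q := w) hp).2
      ⟨rfl, by omega, by omega⟩
    rw [hq, hr]; omega
  · omega

lemma not_negMultiple_liftDigit (hc : |c| < p) :
    ¬(liftDigit p c w < 0 ∧ (p : ℤ) ∣ liftDigit p c w) := by
  rintro ⟨hneg, hdvd⟩
  have hc0 : c = 0 := Int.eq_zero_of_abs_lt_dvd
    ((Int.dvd_iff_dvd_of_dvd_sub dvd_liftDigit_sub).1 hdvd) hc
  have : (0 : ℤ) ≤ p * w := by positivity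
  unfold liftDigit at hneg
  split_ifs at hneg <;> omega

lemma quotDigit_neg_mul (hp : 0 < p) : quotDigit p (-(p * (w + 1))) = w := by
  have hpz : (0 : ℤ) < p := by exact_mod_cast hp
  have hq := ((Int.ediv_emod_unique (a := -(p * (w + 1))) (r := 0) (q := -(w + 1)) hpz).2
    ⟨by ring, le_rfl, hpz⟩).1
  have : (0 : ℤ) < p * (w + 1) := by positivity
  unfold quotDigit
  rw [if_neg (by omega), hq]
  omega

lemma abs_sred_lt (hp : 0 < p) (hz : ¬(z < 0 ∧ (p : ℤ) ∣ z)) : |sred p z| < p := by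
  have hpz : (0 : ℤ) < p := by exact_mod_cast hp
  have h0 := Int.emod_nonneg z hpz.ne'
  have h1 := Int.emod_lt_of_pos z hpz
  have h2 : z < 0 → z % p ≠ 0 := fun hneg h => hz ⟨hneg, Int.dvd_of_emod_eq_zero h⟩
  unfold sred
  split_ifs <;> rw [abs_lt] <;> omega

lemma liftDigit_sred_quotDigit (hp : 0 < p) (hz : ¬(z < 0 ∧ (p : ℤ) ∣ z)) :
    liftDigit p (sred p z) (quotDigit p z) = z := by
  have hpz : (0 : ℤ) < p := by exact_mod_cast hp
  have h0 := Int.emod_nonneg z hpz.ne'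
  have h1 := Int.emod_lt_of_pos z hpz
  have h2 : z < 0 → z % p ≠ 0 := fun hneg h => hz ⟨hneg, Int.dvd_of_emod_eq_zero h⟩
  have hz' := Int.emod_add_mul_ediv z p
  unfold liftDigit sred quotDigit
  by_cases hz0 : 0 ≤ z
  · have : 0 ≤ z / p := Int.ediv_nonneg hz0 hpz.le
    simp only [hz0, if_true, Int.toNat_of_nonneg this]
    rw [if_neg (by omega)]
    linarith
  · have : z / p < 0 := Int.ediv_neg_of_neg_of_pos (by omega) hpz
    simp only [hz0, if_false]
    rw [if_pos (by omega), Int.toNat_of_nonneg (by omega)]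
    linarith

lemma neg_mul_quotDigit (hp : 0 < p) (hz : z < 0 ∧ (p : ℤ) ∣ z) :
    -(p * (quotDigit p z + 1) : ℤ) = z := by
  have hpz : (0 : ℤ) < p := by exact_mod_cast hp
  obtain ⟨hneg, d, rfl⟩ := hz
  have hd : d < 0 := by nlinarith
  unfold quotDigit
  rw [if_neg (by omega), Int.mul_ediv_cancel_left _ hpz.ne', Int.toNat_of_nonneg (by omega)]
  ring

end Digits

section DigitVectors

variable {ι : Type*} {p : ℕ} {U : Finset ι} {c : ι → ℤ} {w : ι → ℕ}

def digitSupport [Fintype ι] (p : ℕ) (x : ι → ℤ) : Finset ι :=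
  {i | ¬(x i < 0 ∧ (p : ℤ) ∣ x i)}

lemma mem_digitSupport [Fintype ι] {x : ι → ℤ} {i : ι} :
    i ∈ digitSupport p x ↔ ¬(x i < 0 ∧ (p : ℤ) ∣ x i) := by
  simp [digitSupport]

variable [DecidableEq ι]

def liftDigits (p : ℕ) (U : Finset ι) (c : ι → ℤ) (w : ι → ℕ) : ι → ℤ :=
  fun i => if i ∈ U then liftDigit p (c i) (w i) else -(p * (w i + 1))

lemma quotDigit_comp_liftDigits (hp : 0 < p) (hc : ∀ i ∈ U, |c i| < p) :
    quotDigit p ∘ liftDigits p U c w = w := by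
  funext i
  by_cases hi : i ∈ U
  · simpa only [Function.comp_apply, liftDigits, if_pos hi]
      using (sred_liftDigit_and_quotDigit_liftDigit (hc i hi)).2
  · simpa only [Function.comp_apply, liftDigits, if_neg hi] using quotDigit_neg_mul hp

variable [Fintype ι]

def residues (p : ℕ) (x : ι → ℤ) : ι → ℤ :=
  fun i => if i ∈ digitSupport p x then sred p (x i) else 0

/-- For `x ∈ Ω(M, k + n p)` with `k < p`, the `t` with `‖residues p x‖₁ = k + t p`. -/
def level (p : ℕ) (x : ι → ℤ) : ℕ := (∑ i ∈ digitSupport p x, (residues p x i).natAbs) / p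

lemma liftDigits_residues_quotDigit (hp : 0 < p) (x : ι → ℤ) :
    liftDigits p (digitSupport p x) (residues p x) (quotDigit p ∘ x) = x := by
  funext i
  by_cases hi : i ∈ digitSupport p x
  · simp only [liftDigits, residues, if_pos hi, Function.comp_apply]
    exact liftDigit_sred_quotDigit hp (mem_digitSupport.1 hi)
  · simp only [liftDigits, if_neg hi, Function.comp_apply]
    exact neg_mul_quotDigit hp (not_not.1 (mem_digitSupport.not.1 hi))

lemma abs_residues_lt (hp : 0 < p) (x : ι → ℤ) : ∀ i ∈ digitSupport p x, |residues p x i| < p :=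
  fun i hi => by
    simpa only [residues, if_pos hi] using abs_sred_lt hp (mem_digitSupport.1 hi)

lemma digitSupport_liftDigits (hp : 0 < p) (hc : ∀ i ∈ U, |c i| < p) :
    digitSupport p (liftDigits p U c w) = U := by
  ext i
  rw [mem_digitSupport]
  by_cases hi : i ∈ U
  · rw [liftDigits, if_pos hi]
    exact iff_of_true (not_negMultiple_liftDigit (hc i hi)) hi
  · rw [liftDigits, if_neg hi]
    have hneg : -(p * (w i + 1) : ℤ) < 0 := by simp only [neg_lt_zero]; positivity
    exact iff_of_false (not_not.2 ⟨hneg, -(w i + 1 : ℤ), by ring⟩) hi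

lemma residues_liftDigits (hp : 0 < p) (hsupp : ∀ i ∉ U, c i = 0) (hc : ∀ i ∈ U, |c i| < p) :
    residues p (liftDigits p U c w) = c := by
  funext i
  rw [residues, digitSupport_liftDigits hp hc]
  by_cases hi : i ∈ U
  · rw [if_pos hi, liftDigits, if_pos hi]
    exact (sred_liftDigit_and_quotDigit_liftDigit (hc i hi)).1
  · rw [if_neg hi, hsupp i hi]

lemma sum_natAbs_liftDigits :
    ∑ i, (liftDigits p U c w i).natAbs = ∑ i ∈ U, (c i).natAbs + p * (∑ i, w i + #Uᶜ) := by
  have hU : ∑ i ∈ U, (liftDigits p U c w i).natAbs = ∑ i ∈ U, ((c i).natAbs + p * w i) :=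
    sum_congr rfl fun i hi => by rw [liftDigits, if_pos hi, natAbs_liftDigit]
  have hUc : ∑ i ∈ Uᶜ, (liftDigits p U c w i).natAbs = ∑ i ∈ Uᶜ, (p * w i + p) :=
    sum_congr rfl fun i hi => by
      rw [liftDigits, if_neg (mem_compl.1 hi), Int.natAbs_neg]
      norm_cast
  rw [← sum_add_sum_compl U, hU, hUc, ← sum_add_sum_compl U w]
  simp only [sum_add_distrib, ← mul_sum, sum_const, smul_eq_mul]
  ring

lemma dvd_sum_mul_liftDigits_sub (q : ι → ℤ) :
    (p : ℤ) ∣ ∑ i, q i * liftDigits p U c w i - ∑ i ∈ U, q i * c i := by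
  rw [← sum_filter_add_sum_filter_not univ (· ∈ U), filter_mem_eq_inter, univ_inter,
    add_sub_right_comm, ← sum_sub_distrib]
  refine dvd_add (dvd_sum fun i hi => ?_) (dvd_sum fun i hi => ?_)
  · rw [liftDigits, if_pos hi, ← mul_sub]
    exact dvd_mul_of_dvd_right dvd_liftDigit_sub _
  · rw [liftDigits, if_neg (mem_filter.1 hi).2]
    exact dvd_mul_of_dvd_right ⟨-(w i + 1 : ℤ), by ring⟩ _

lemma level_lt_card (hp : 0 < p) [Nonempty ι] (x : ι → ℤ) : level p x < Fintype.card ι := by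
  have hle : ∑ i ∈ digitSupport p x, (residues p x i).natAbs ≤ #(digitSupport p x) * (p - 1) :=
    sum_le_card_nsmul _ _ _ fun i hi => by
      have := abs_residues_lt hp x i hi
      rw [Int.abs_eq_natAbs] at this
      omega
  have hcard := card_le_univ (digitSupport p x)
  have hι := Fintype.card_pos (α := ι)
  rw [level, Nat.div_lt_iff_lt_mul hp]
  calc _ ≤ #(digitSupport p x) * (p - 1) := hle
    _ ≤ Fintype.card ι * (p - 1) := Nat.mul_le_mul_right _ hcard
    _ < Fintype.card ι * p := Nat.mul_lt_mul_of_pos_left (by omega) hι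

lemma sum_natAbs_residues_and_sum_quotDigit {k n : ℕ} {x : ι → ℤ} (hk : k < p)
    (hx : ∑ i, (x i).natAbs = k + n * p) :
    ∑ i ∈ digitSupport p x, (residues p x i).natAbs = k + level p x * p ∧
      ∑ i, quotDigit p (x i) + (#(digitSupport p x)ᶜ + level p x) = n := by
  have h := sum_natAbs_liftDigits (p := p) (U := digitSupport p x) (c := residues p x)
    (w := quotDigit p ∘ x)
  rw [liftDigits_residues_quotDigit (by omega), hx] at h
  have := eq_add_div_mul_and_add_div_eq hk h.symm
  simp only [Function.comp_apply] at this
  exact ⟨this.1, by rw [← add_assoc]; exact this.2⟩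

end DigitVectors

section Tuples

variable (ι : Type*) [Fintype ι] [DecidableEq ι]

def piAntidiagOffset (r n : ℕ) : Finset (ι → ℕ) :=
  if r ≤ n then univ.piAntidiag (n - r) else ∅

variable {ι}

lemma mem_piAntidiagOffset {r n : ℕ} {w : ι → ℕ} :
    w ∈ piAntidiagOffset ι r n ↔ ∑ i, w i + r = n := by
  unfold piAntidiagOffset
  split_ifs with h
  · rw [mem_piAntidiag]
    simp only [mem_univ, implies_true, and_true]
    exact eq_tsub_iff_add_eq_of_le h
  · simp only [notMem_empty, false_iff]
    omega

lemma card_piAntidiagOffset (r n : ℕ) :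
    #(piAntidiagOffset ι r n) =
      if r ≤ n then (Fintype.card ι + (n - r) - 1).choose (n - r) else 0 := by
  unfold piAntidiagOffset
  split_ifs
  · rw [← map_sym_eq_piAntidiag, card_map, sym_univ, card_univ, Sym.card_sym_eq_choose]
  · rfl

end Tuples

lemma card_piAntidiagOffset_fin_eq_ibinom {m u : ℕ} (hm : 1 ≤ m) (hu : u ≤ m) (t n : ℕ) :
    #(piAntidiagOffset (Fin m) (m - u + t) n) = ibinom ((n : ℤ) - t + u - 1) (m - 1) := by
  rw [card_piAntidiagOffset, Fintype.card_fin, ibinom]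
  split_ifs with h h'
  · rw [← Nat.choose_symm (by omega)]
    congr 1 <;> omega
  · omega
  · exact (Nat.choose_eq_zero_of_lt (by omega)).symm
  · rfl

lemma omegaSet_finite {m : ℕ} (p : ℕ) (q : Fin m → ℤ) (U : Finset (Fin m)) (K : ℕ) :
    (OmegaSet p q U K).Finite := by
  refine (Set.finite_Icc (fun _ => -(K : ℤ)) (fun _ => (K : ℤ))).subset
    fun x ⟨hsupp, _, hnorm⟩ => ?_
  have hbound : ∀ i, (x i).natAbs ≤ K := fun i => by
    by_cases hi : i ∈ U
    · exact hnorm ▸ single_le_sum (f := fun j => (x j).natAbs) (fun _ _ => Nat.zero_le _) hi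
    · simp [hsupp i hi]
  exact ⟨fun i => by have := hbound i; dsimp only; omega,
    fun i => by have := hbound i; dsimp only; omega⟩

lemma cSet_finite {m : ℕ} (p : ℕ) (q : Fin m → ℤ) (U : Finset (Fin m)) (K : ℕ) :
    (CSet p q U K).Finite :=
  (omegaSet_finite p q U K).subset (Set.sep_subset _ _)

section Counting

variable {p m : ℕ} {q : Fin m → ℤ} {k n t : ℕ} {U : Finset (Fin m)} {c : Fin m → ℤ}
  {w : Fin m → ℕ}

lemma residues_mem_cSet (hk : k < p) {x : Fin m → ℤ}
    (hx : x ∈ OmegaSet p q univ (k + n * p)) :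
    residues p x ∈ CSet p q (digitSupport p x) (k + level p x * p) := by
  have hp : 0 < p := by omega
  obtain ⟨-, hdvd, hnorm⟩ := hx
  have hsub := dvd_sum_mul_liftDigits_sub (p := p) (U := digitSupport p x) (c := residues p x)
    (w := quotDigit p ∘ x) q
  rw [liftDigits_residues_quotDigit hp] at hsub
  exact ⟨⟨fun i hi => by rw [residues, if_neg hi], (Int.dvd_iff_dvd_of_dvd_sub hsub).1 hdvd,
    (sum_natAbs_residues_and_sum_quotDigit hk hnorm).1⟩, abs_residues_lt hp x⟩

lemma liftDigits_mem_omegaSet (hc : c ∈ CSet p q U (k + t * p))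
    (hw : ∑ i, w i + (#Uᶜ + t) = n) :
    liftDigits p U c w ∈ OmegaSet p q univ (k + n * p) := by
  obtain ⟨⟨-, hdvd, hnorm⟩, -⟩ := hc
  refine ⟨fun i hi => absurd (mem_univ i) hi,
    (Int.dvd_iff_dvd_of_dvd_sub (dvd_sum_mul_liftDigits_sub q)).2 hdvd, ?_⟩
  rw [sum_natAbs_liftDigits, hnorm, ← hw]
  ring

lemma level_liftDigits (hk : k < p) (hc : c ∈ CSet p q U (k + t * p)) :
    level p (liftDigits p U c w) = t := by
  have hp : 0 < p := by omega
  obtain ⟨⟨hsupp, -, hnorm⟩, hlt⟩ := hc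
  rw [level, digitSupport_liftDigits hp hlt, residues_liftDigits hp hsupp hlt, hnorm,
    Nat.add_mul_div_right _ _ hp, Nat.div_eq_of_lt hk, zero_add]

lemma card_omegaSet_fiber (hk : k < p) (t : ℕ) (U : Finset (Fin m)) :
    #{x ∈ (omegaSet_finite p q univ (k + n * p)).toFinset |
        (level p x, digitSupport p x) = (t, U)} =
      #(cSet_finite p q U (k + t * p)).toFinset * #(piAntidiagOffset (Fin m) (#Uᶜ + t) n) := by
  have hp : 0 < p := by omega
  rw [← card_product]
  refine card_nbij' (fun x => (residues p x, quotDigit p ∘ x))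
    (fun cw => liftDigits p U cw.1 cw.2) ?_ ?_ ?_ ?_
  · intro x hx
    simp only [coe_filter, Set.Finite.mem_toFinset, Prod.mk.injEq, Set.mem_ofPred_eq] at hx
    obtain ⟨hx, rfl, rfl⟩ := hx
    simp only [coe_product, Set.mem_prod, Set.Finite.coe_toFinset, mem_coe, mem_piAntidiagOffset]
    exact ⟨residues_mem_cSet hk hx, (sum_natAbs_residues_and_sum_quotDigit hk hx.2.2).2⟩
  · rintro ⟨c, w⟩ hcw
    simp only [coe_product, Set.mem_prod, Set.Finite.coe_toFinset, mem_coe,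
      mem_piAntidiagOffset] at hcw
    simp only [coe_filter, Set.Finite.mem_toFinset, Prod.mk.injEq, Set.mem_ofPred_eq]
    exact ⟨liftDigits_mem_omegaSet hcw.1 hcw.2, level_liftDigits hk hcw.1,
      digitSupport_liftDigits hp hcw.1.2⟩
  · intro x hx
    simp only [coe_filter, Prod.mk.injEq, Set.mem_ofPred_eq] at hx
    obtain ⟨-, -, rfl⟩ := hx
    exact liftDigits_residues_quotDigit hp x
  · rintro ⟨c, w⟩ hcw
    simp only [coe_product, Set.mem_prod, Set.Finite.coe_toFinset] at hcw
    obtain ⟨⟨⟨hsupp, -, -⟩, hlt⟩, -⟩ := hcw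
    exact Prod.ext (residues_liftDigits hp hsupp hlt) (quotDigit_comp_liftDigits hp hlt)

end Counting

theorem NL_eq_sum_binom_gamma_general (p m : ℕ) (hm : 1 ≤ m) (q : Fin m → ℤ)
    (k n : ℕ) (hk : k < p) :
    (OmegaSet p q Finset.univ (k + n * p)).ncard =
      ∑ t ∈ Finset.range m, ∑ U ∈ (Finset.univ : Finset (Fin m)).powerset,
        ibinom ((n : ℤ) - (t : ℤ) + (U.card : ℤ) - 1) (m - 1) *
          (CSet p q U (k + t * p)).ncard := by
  have : Nonempty (Fin m) := ⟨⟨0, hm⟩⟩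
  have hmaps : ∀ x ∈ (omegaSet_finite p q univ (k + n * p)).toFinset,
      (level p x, digitSupport p x) ∈ range m ×ˢ univ.powerset := fun x _ => by
    simpa using level_lt_card (ι := Fin m) (by omega : 0 < p) x
  rw [Set.ncard_eq_toFinset_card _ (omegaSet_finite p q univ _),
    card_eq_sum_card_fiberwise hmaps, sum_product]
  refine sum_congr rfl fun t _ => sum_congr rfl fun U _ => ?_
  rw [card_omegaSet_fiber hk, card_compl, Fintype.card_fin,
    card_piAntidiagOffset_fin_eq_ibinom hm (card_finset_fin_le U),
    Set.ncard_eq_toFinset_card _ (cSet_finite p q U _), mul_comm]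

/-- **Theorem (main formula).** For `k ∈ {0,…,p-1}` and `n ∈ ℕ`,
`N_𝓛(k+np) = ∑_{t=0}^{m-1} ∑_{U ⊆ M} binom(n-t+|U|-1, m-1) ⬝ γ(U, k+tp)`. -/
theorem NL_eq_sum_binom_gamma (p m : ℕ) (hp : 1 ≤ p) (hm : 1 ≤ m) (q : Fin m → ℤ)
    (hq : ∀ i, IsCoprime (q i) (p : ℤ)) (k n : ℕ) (hk : k < p) :
    (OmegaSet p q Finset.univ (k + n * p)).ncard =
      ∑ t ∈ Finset.range m, ∑ U ∈ (Finset.univ : Finset (Fin m)).powerset,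
        ibinom ((n : ℤ) - (t : ℤ) + (U.card : ℤ) - 1) (m - 1) *
          (CSet p q U (k + t * p)).ncard :=
  NL_eq_sum_binom_gamma_general p m hm q k n hk
end

section
/- Let p, m ≥ 1 be natural numbers and q_1,…,q_m integers each coprime to p. Fix k ∈ {0,…,p−1}, n ∈ ℕ, a subset N ⊆ M with N̄ = M ∖ N, and an integer t with 0 ≤ t ≤ n − |N|. Then for every y ∈ C(N̄, k+tp) there exists x ∈ Ω_N(k+np) whose signed reductions agree with y on N̄, i.e. x̄_j = y_j for all j ∈ N̄. In other words, the reduction map from Ω_N(k+np) to ⊔_{0≤t≤n−|N|} C(N̄, k+tp) is surjective. -/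
/-!
Keep `y` on `N̄` and put `-p` on every coordinate of `N`: this point lies in
`Ω_N(k + (t + |N|) p)`. The missing mass `(n - t - |N|) p` is then added to one coordinate,
pushing it away from `0`. Such an outward shift by a nonnegative multiple of `p` keeps the
congruence, the signed reduction and the property of being a negative multiple of `p`, and
raises the `1`-norm by exactly its size.
-/

open Finset Function

lemma sum_update_apply_add {ι M : Type*} [Fintype ι] [DecidableEq ι] [AddCommMonoid M]
    (f : ι → ℤ → M) (x : ι → ℤ) (j : ι) (b : ℤ) :
    ∑ i, f i (update x j b i) + f j (x j) = ∑ i, f i (x i) + f j b := by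
  have hrest : ∑ i ∈ univ.erase j, f i (update x j b i) = ∑ i ∈ univ.erase j, f i (x i) :=
    sum_congr rfl fun i hi => by rw [update_of_ne (ne_of_mem_erase hi)]
  rw [← add_sum_erase _ _ (mem_univ j), ← add_sum_erase _ _ (mem_univ j), hrest, update_self]
  abel

def outward (z d : ℤ) : ℤ := if 0 ≤ z then z + d else z - d

section outward

variable {p : ℕ} {z d : ℤ}

lemma natAbs_outward (hd : 0 ≤ d) : (outward z d).natAbs = z.natAbs + d.natAbs := by
  unfold outward; split_ifs <;> omega

lemma dvd_outward_sub (z d : ℤ) : d ∣ outward z d - z := by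
  unfold outward; split_ifs <;> simp

lemma sred_outward (hd : 0 ≤ d) (hpd : (p : ℤ) ∣ d) : sred p (outward z d) = sred p z := by
  obtain ⟨c, rfl⟩ := hpd
  unfold sred outward
  split_ifs <;> first
    | linarith | rw [Int.add_mul_emod_self_left] | rw [Int.sub_mul_emod_self_left]

lemma outward_neg_dvd_iff (hd : 0 ≤ d) (hpd : (p : ℤ) ∣ d) :
    (outward z d < 0 ∧ (p : ℤ) ∣ outward z d) ↔ (z < 0 ∧ (p : ℤ) ∣ z) := by
  have hdvd : (p : ℤ) ∣ outward z d ↔ (p : ℤ) ∣ z :=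
    dvd_iff_dvd_of_dvd_sub (hpd.trans (dvd_outward_sub z d))
  have hneg : outward z d < 0 ↔ z < 0 := by
    unfold outward; split_ifs <;> omega
  rw [hdvd, hneg]

lemma sred_eq_self (h : |z| < p) : sred p z = z := by
  rw [abs_lt] at h
  unfold sred
  split_ifs with hz
  · exact Int.emod_eq_of_lt hz h.2
  · rw [← Int.add_emod_right, Int.emod_eq_of_lt (by omega) (by omega)]
    ring

lemma not_neg_dvd_of_abs_lt (h : |z| < p) : ¬(z < 0 ∧ (p : ℤ) ∣ z) := by
  rintro ⟨hneg, hdvd⟩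
  have := Int.le_of_dvd (neg_pos.2 hneg) (dvd_neg.2 hdvd)
  rw [abs_lt] at h
  omega

end outward

section vectors

variable {p m : ℕ} {q : Fin m → ℤ} {N : Finset (Fin m)}

lemma piecewise_mem_omegaN (hp : 0 < p) {K : ℕ} {y : Fin m → ℤ} (hy : y ∈ CSet p q Nᶜ K) :
    N.piecewise (fun _ => -(p : ℤ)) y ∈ OmegaN p q N K N.card := by
  obtain ⟨⟨-, hdvd, hnorm⟩, hsmall⟩ := hy
  have hNc {M : Type} [AddCommMonoid M] {f : Fin m → ℤ → M} :
      ∑ i ∈ Nᶜ, f i (N.piecewise (fun _ => -(p : ℤ)) y i) = ∑ i ∈ Nᶜ, f i (y i) :=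
    sum_congr rfl fun i hi => by rw [piecewise_eq_of_notMem _ _ _ (mem_compl.1 hi)]
  refine ⟨⟨fun i hi => absurd (mem_univ i) hi, ?_, ?_⟩, fun i => ?_⟩
  · rw [← sum_add_sum_compl N, hNc]
    exact dvd_add (dvd_sum fun i hi => by simp [hi]) hdvd
  · rw [← sum_add_sum_compl N, hNc, hnorm, add_comm,
      sum_congr rfl (g := fun _ => p) fun i hi => by simp [hi]]
    simp
  · by_cases hi : i ∈ N
    · simp [hi, hp]
    · simpa [piecewise_eq_of_notMem _ _ _ hi, hi] using
        not_neg_dvd_of_abs_lt (hsmall i (mem_compl.2 hi))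

lemma update_outward_mem_omegaN {K a : ℕ} {x : Fin m → ℤ} (hx : x ∈ OmegaN p q N K a)
    (j : Fin m) (c : ℕ) : update x j (outward (x j) (c * p)) ∈ OmegaN p q N K (a + c) := by
  obtain ⟨⟨-, hdvd, hnorm⟩, hsign⟩ := hx
  have hd : (0 : ℤ) ≤ c * p := by positivity
  have hpd : (p : ℤ) ∣ c * p := dvd_mul_left _ _
  refine ⟨⟨fun i hi => absurd (mem_univ i) hi, ?_, ?_⟩, fun i => ?_⟩
  · have hsum := sum_update_apply_add (fun i z => q i * z) x j (outward (x j) (c * p))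
    have hshift : ∑ i, q i * update x j (outward (x j) (c * p)) i
        = ∑ i, q i * x i + q j * (outward (x j) (c * p) - x j) := by
      linear_combination hsum
    rw [hshift]
    exact dvd_add hdvd (dvd_mul_of_dvd_right (hpd.trans (dvd_outward_sub _ _)) _)
  · have hsum := sum_update_apply_add (fun _ z => z.natAbs) x j (outward (x j) (c * p))
    simp only [natAbs_outward hd, Int.natAbs_mul, Int.natAbs_natCast] at hsum
    rw [add_mul]
    omega
  · rcases eq_or_ne i j with rfl | hij
    · rw [update_self, outward_neg_dvd_iff hd hpd, hsign]
    · rw [update_of_ne hij, hsign]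

lemma sred_update_outward (x : Fin m → ℤ) (j : Fin m) (c : ℕ) (i : Fin m) :
    sred p (update x j (outward (x j) (c * p)) i) = sred p (x i) := by
  rcases eq_or_ne i j with rfl | hij
  · rw [update_self, sred_outward (by positivity) (dvd_mul_left _ _)]
  · rw [update_of_ne hij]

lemma omegaN_add_mul (K t a : ℕ) : OmegaN p q N (K + t * p) a = OmegaN p q N K (t + a) := by
  rw [OmegaN, OmegaN, show K + t * p + a * p = K + (t + a) * p by ring]

end vectors

theorem exists_preimage_sred_general (p m : ℕ) (hp : 1 ≤ p) (hm : 1 ≤ m) (q : Fin m → ℤ) (k n : ℕ)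
    (N : Finset (Fin m)) (t : ℕ) (ht : t + N.card ≤ n)
    (y : Fin m → ℤ) (hy : y ∈ CSet p q Nᶜ (k + t * p)) :
    ∃ x ∈ OmegaN p q N k n, ∀ j ∈ Nᶜ, sred p (x j) = y j := by
  set z := N.piecewise (fun _ => -(p : ℤ)) y
  have hz : z ∈ OmegaN p q N (k + t * p) N.card := piecewise_mem_omegaN hp hy
  set j₀ : Fin m := ⟨0, hm⟩
  refine ⟨update z j₀ (outward (z j₀) ((n - t - N.card : ℕ) * p)), ?_, fun j hj => ?_⟩
  · have hx := update_outward_mem_omegaN hz j₀ (n - t - N.card)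
    rwa [omegaN_add_mul, show t + (N.card + (n - t - N.card)) = n by omega] at hx
  · rw [sred_update_outward, show z j = y j from piecewise_eq_of_notMem _ _ _ (mem_compl.1 hj)]
    exact sred_eq_self (hy.2 j hj)

/-- **Lemma (surjectivity of the reduction map).** For `0 ≤ t ≤ n - |N|` and every
`y ∈ C(N̄, k+tp)` there is `x ∈ Ω_N(k+np)` whose signed reductions agree with `y`
on `N̄ = M \ N`. -/
theorem exists_preimage_sred (p m : ℕ) (hp : 1 ≤ p) (hm : 1 ≤ m) (q : Fin m → ℤ)
    (hq : ∀ i, IsCoprime (q i) (p : ℤ)) (k n : ℕ) (hk : k < p)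
    (N : Finset (Fin m)) (t : ℕ) (ht : t + N.card ≤ n)
    (y : Fin m → ℤ) (hy : y ∈ CSet p q Nᶜ (k + t * p)) :
    ∃ x ∈ OmegaN p q N k n, ∀ j ∈ Nᶜ, sred p (x j) = y j :=
  exists_preimage_sred_general p m hp hm q k n N t ht y hy
end

section
/- Let p, m ≥ 1 be natural numbers and q_1,…,q_m integers each coprime to p. Fix k ∈ {0,…,p−1}, n ∈ ℕ, a subset N ⊆ M with N̄ = M ∖ N, and an integer t with 0 ≤ t ≤ n − |N|. Then for every y ∈ C(N̄, k+tp), the set {x ∈ Ω_N(k+np) : x̄_j = y_j for all j ∈ N̄} has cardinality equal to the binomial coefficient binom(n−t+|N̄|−1, m−1) = binom(n−t−|N|+m−1, m−1). -/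
/-!
Coordinatewise, membership in the fiber says `sred p (x i) = z i`, where `z i = -p` for `i ∈ N`
(the integers of signed reduction `-p` are exactly the negative multiples of `p`) and
`z i = y i` otherwise. For `-p ≤ z < p`, the integers of signed reduction `z` are
`z + p c` (if `z ≥ 0`) or `z - p c` (if `z < 0`) with `c ∈ ℕ`, of absolute value `|z| + p c`.
The congruence condition is then automatic, since `x ≡ y [ZMOD p]` coordinatewise, and the
norm condition becomes `∑ c i = n - t - |N|`: the fiber is in bijection with the weak
compositions of `n - t - |N|` into `m` parts, counted by stars and bars.
-/

theorem ncard_setOf_sum_eq (ι : Type*) [Fintype ι] [Nonempty ι] (s : ℕ) :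
    {c : ι → ℕ | ∑ i, c i = s}.ncard =
      (s + Fintype.card ι - 1).choose (Fintype.card ι - 1) := by
  classical
  have hcard : 0 < Fintype.card ι := Fintype.card_pos
  change Nat.card {c : ι → ℕ // ∑ i, c i = s} = _
  rw [← Nat.card_congr (Sym.equivNatSumOfFintype ι s),
    Nat.card_eq_fintype_card, Sym.card_sym_eq_choose,
    Nat.choose_symm_of_eq_add (by omega : Fintype.card ι + s - 1 = s + (Fintype.card ι - 1))]
  congr 1
  omega

section SignedReduction

variable {p : ℕ}

def sredLift (p : ℕ) (y : ℤ) (c : ℕ) : ℤ := if 0 ≤ y then y + p * c else y - p * c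

theorem sred_modEq (p : ℕ) (x : ℤ) : sred p x ≡ x [ZMOD p] := by
  unfold sred
  split_ifs
  · exact Int.mod_modEq x p
  · exact ((Int.mod_modEq x p).sub_right (p : ℤ)).trans (Int.sub_emod_right x p)

theorem sred_eq_neg_iff (hp : 0 < p) (x : ℤ) : sred p x = -p ↔ x < 0 ∧ (p : ℤ) ∣ x := by
  have hp' : (0 : ℤ) < p := by exact_mod_cast hp
  have hr := Int.emod_nonneg x hp'.ne'
  unfold sred
  split_ifs with hx
  · constructor <;> intro h <;> omega
  · rw [Int.dvd_iff_emod_eq_zero]; omega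

theorem sred_eq_iff (hp : 0 < p) {x y : ℤ} (hy : -p ≤ y) (hy' : y < p) :
    sred p x = y ↔ ∃ c : ℕ, x = sredLift p y c := by
  have hp' : (0 : ℤ) < p := by exact_mod_cast hp
  constructor
  · rintro rfl
    have hr := Int.emod_nonneg x hp'.ne'
    have hr' := Int.emod_lt_of_pos x hp'
    have hx := Int.emod_add_mul_ediv x p
    unfold sred sredLift
    by_cases hx0 : 0 ≤ x
    · refine ⟨(x / p).toNat, ?_⟩
      rw [if_pos hx0, if_pos hr, Int.toNat_of_nonneg (Int.ediv_nonneg hx0 hp'.le)]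
      linarith
    · have hq : x / p < 0 := Int.ediv_neg_of_neg_of_pos (by omega) hp'
      refine ⟨(-(x / p) - 1).toNat, ?_⟩
      rw [if_neg hx0, if_neg (by omega), Int.toNat_of_nonneg (by omega)]
      linarith
  · rintro ⟨c, rfl⟩
    have hc : (0 : ℤ) ≤ p * c := by positivity
    unfold sredLift
    split_ifs with hy0
    · rw [sred, if_pos (by positivity), Int.add_mul_emod_self_left, Int.emod_eq_of_lt hy0 hy']
    · rw [sred, if_neg (by omega), show y - p * c = y + p + p * (-c - 1) by ring,
        Int.add_mul_emod_self_left, Int.emod_eq_of_lt (by omega) (by omega)]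
      ring

theorem sredLift_injective (hp : 0 < p) (y : ℤ) : Function.Injective (sredLift p y) := by
  have hp' : (p : ℤ) ≠ 0 := by exact_mod_cast hp.ne'
  intro c c' h
  unfold sredLift at h
  split_ifs at h
  · exact_mod_cast mul_left_cancel₀ hp' (add_left_cancel h)
  · exact_mod_cast mul_left_cancel₀ hp' (sub_right_injective h)

theorem natAbs_sredLift (y : ℤ) (c : ℕ) :
    (sredLift p y c).natAbs = y.natAbs + p * c := by
  unfold sredLift
  split_ifs <;> omega

theorem ncard_setOf_sred_eq_and_sum_natAbs_eq {ι : Type*} [Fintype ι] [Nonempty ι]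
    (hp : 0 < p) (z : ι → ℤ) (hz : ∀ i, -p ≤ z i ∧ z i < p) (s : ℕ) :
    {x : ι → ℤ | (∀ i, sred p (x i) = z i) ∧
        ∑ i, (x i).natAbs = ∑ i, (z i).natAbs + p * s}.ncard =
      (s + Fintype.card ι - 1).choose (Fintype.card ι - 1) := by
  have hinj : Function.Injective fun (c : ι → ℕ) i => sredLift p (z i) (c i) :=
    fun c c' h => funext fun i => sredLift_injective hp (z i) (congrFun h i)
  have hsum (c : ι → ℕ) :
      ∑ i, (sredLift p (z i) (c i)).natAbs = ∑ i, (z i).natAbs + p * ∑ i, c i := by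
    simp only [natAbs_sredLift, Finset.sum_add_distrib, Finset.mul_sum]
  suffices himage : {x : ι → ℤ | (∀ i, sred p (x i) = z i) ∧
      ∑ i, (x i).natAbs = ∑ i, (z i).natAbs + p * s} =
      (fun c i => sredLift p (z i) (c i)) '' {c : ι → ℕ | ∑ i, c i = s} by
    rw [himage, Set.ncard_image_of_injective _ hinj, ncard_setOf_sum_eq]
  ext x
  simp only [Set.mem_ofPred_eq, Set.mem_image, sred_eq_iff hp (hz _).1 (hz _).2]
  constructor
  · rintro ⟨hx, hnorm⟩
    choose c hc using hx
    obtain rfl : x = fun i => sredLift p (z i) (c i) := funext hc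
    exact ⟨c, Nat.eq_of_mul_eq_mul_left hp (by rw [hsum] at hnorm; omega), rfl⟩
  · rintro ⟨c, hc, rfl⟩
    exact ⟨fun i => ⟨c i, rfl⟩, by rw [hsum, hc]⟩

end SignedReduction

section Fiber

variable {p m : ℕ} {q : Fin m → ℤ} {N : Finset (Fin m)} {y : Fin m → ℤ} {r : ℕ}

def fiberResidue (p : ℕ) (N : Finset (Fin m)) (y : Fin m → ℤ) (i : Fin m) : ℤ :=
  if i ∈ N then -p else y i

theorem fiberResidue_mem_Ico (hp : 0 < p) (hy : y ∈ CSet p q Nᶜ r) (i : Fin m) :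
    -p ≤ fiberResidue p N y i ∧ fiberResidue p N y i < p := by
  unfold fiberResidue
  split_ifs with hi
  · have : (0 : ℤ) < p := by exact_mod_cast hp
    omega
  · exact (abs_lt.mp (hy.2 i (Finset.mem_compl.2 hi))).imp_left le_of_lt

theorem sum_natAbs_fiberResidue (hy : y ∈ CSet p q Nᶜ r) :
    ∑ i, (fiberResidue p N y i).natAbs = r + N.card * p := by
  rw [← Finset.sum_add_sum_compl N, ← hy.1.2.2, add_comm _ (N.card * p)]
  congr 1
  · exact Finset.sum_const_nat fun i hi => by simp [fiberResidue, hi]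
  · exact Finset.sum_congr rfl fun i hi => by simp [fiberResidue, Finset.mem_compl.1 hi]

theorem fiber_eq_setOf_sred_eq_fiberResidue (hp : 0 < p) (hy : y ∈ CSet p q Nᶜ r)
    (k n : ℕ) :
    {x ∈ OmegaN p q N k n | ∀ j ∈ Nᶜ, sred p (x j) = y j} =
      {x | (∀ i, sred p (x i) = fiberResidue p N y i) ∧ ∑ i, (x i).natAbs = k + n * p} := by
  obtain ⟨⟨hy0, hydvd, -⟩, hylt⟩ := hy
  ext x
  simp only [OmegaN, OmegaSet, Set.mem_ofPred_eq, Finset.mem_univ, not_true_eq_false,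
    IsEmpty.forall_iff, implies_true, true_and]
  constructor
  · rintro ⟨⟨⟨-, hnorm⟩, hsign⟩, hred⟩
    refine ⟨fun i => ?_, hnorm⟩
    unfold fiberResidue
    split_ifs with hi
    · exact (sred_eq_neg_iff hp _).2 ((hsign i).2 hi)
    · exact hred i (Finset.mem_compl.2 hi)
  · rintro ⟨hred, hnorm⟩
    have hmod (i : Fin m) : x i ≡ y i [ZMOD p] := by
      refine (sred_modEq p (x i)).symm.trans ?_
      rw [hred i, fiberResidue]
      split_ifs with hi
      · rw [hy0 i (Finset.notMem_compl.2 hi)]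
        exact Int.modEq_zero_iff_dvd.2 (dvd_neg.2 dvd_rfl)
      · rfl
    refine ⟨⟨⟨?_, hnorm⟩, fun i => ?_⟩, fun i hi => ?_⟩
    · have hsum : ∑ i, q i * x i ≡ ∑ i ∈ Nᶜ, q i * y i [ZMOD p] := by
        rw [Finset.sum_subset (Finset.subset_univ Nᶜ) (f := fun i => q i * y i)
          fun i _ hi => by rw [hy0 i hi, mul_zero]]
        exact Int.ModEq.sum fun i _ => (hmod i).mul_left _
      exact Int.modEq_zero_iff_dvd.1 (hsum.trans (Int.modEq_zero_iff_dvd.2 hydvd))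
    · rw [← sred_eq_neg_iff hp, hred i, fiberResidue]
      split_ifs with hi
      · simp [hi]
      · have := abs_lt.mp (hylt i (Finset.mem_compl.2 hi))
        simp only [hi, iff_false]
        omega
    · simpa [fiberResidue, Finset.mem_compl.1 hi] using hred i

end Fiber

theorem fiber_card_general (p m : ℕ) (hp : 1 ≤ p) (hm : 1 ≤ m) (q : Fin m → ℤ)
    (k n : ℕ) (N : Finset (Fin m)) (t : ℕ) (ht : t + N.card ≤ n)
    (y : Fin m → ℤ) (hy : y ∈ CSet p q Nᶜ (k + t * p)) :
    {x ∈ OmegaN p q N k n | ∀ j ∈ Nᶜ, sred p (x j) = y j}.ncard =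
      ibinom ((n : ℤ) - (t : ℤ) + (Nᶜ.card : ℤ) - 1) (m - 1) := by
  have : Nonempty (Fin m) := Fin.pos_iff_nonempty.1 hm
  obtain ⟨s, rfl⟩ : ∃ s, n = t + N.card + s := ⟨n - t - N.card, by omega⟩
  have hnorm : k + (t + N.card + s) * p = ∑ i, (fiberResidue p N y i).natAbs + p * s := by
    rw [sum_natAbs_fiberResidue hy]
    ring
  have hcompl : (Nᶜ.card : ℤ) = m - N.card := by
    rw [Finset.card_compl, Fintype.card_fin, Nat.cast_sub (card_finset_fin_le N)]
  rw [fiber_eq_setOf_sred_eq_fiberResidue hp hy, hnorm,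
    ncard_setOf_sred_eq_and_sum_natAbs_eq hp _ (fiberResidue_mem_Ico hp hy), Fintype.card_fin,
    ibinom, if_pos (by omega),
    show ((t + N.card + s : ℕ) : ℤ) - t + Nᶜ.card - 1 = (s + m - 1 : ℕ) by omega, Int.toNat_natCast]

/-- **Lemma (cardinality of the fibers).** For `0 ≤ t ≤ n - |N|` and
`y ∈ C(N̄, k+tp)`, the fiber `{x ∈ Ω_N(k+np) : x̄_j = y_j for all j ∈ N̄}` has
cardinality `binom(n-t+|N̄|-1, m-1)`. -/
theorem fiber_card (p m : ℕ) (hp : 1 ≤ p) (hm : 1 ≤ m) (q : Fin m → ℤ)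
    (hq : ∀ i, IsCoprime (q i) (p : ℤ)) (k n : ℕ) (hk : k < p)
    (N : Finset (Fin m)) (t : ℕ) (ht : t + N.card ≤ n)
    (y : Fin m → ℤ) (hy : y ∈ CSet p q Nᶜ (k + t * p)) :
    {x ∈ OmegaN p q N k n | ∀ j ∈ Nᶜ, sred p (x j) = y j}.ncard =
      ibinom ((n : ℤ) - (t : ℤ) + (Nᶜ.card : ℤ) - 1) (m - 1) :=
  fiber_card_general p m hp hm q k n N t ht y hy
end

section
/- Let p ≥ 1, m ≥ 2 be natural numbers with p even, and q_1,…,q_m integers each coprime to p. Then for every odd integer i ≥ 1, the number Σ_{s=0}^{⌊i/2⌋} binom(s+m−2, m−2) · N_𝓛(i−2s) is even. (This number is the dimension of the eigenspace of the eigenvalue λ_i = i(i+2m−2) of the Laplace–Beltrami operator on the lens space L(p;q_1,…,q_m), so for p even every odd-indexed eigenvalue has even multiplicity.) -/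
/-!
Negation `x ↦ -x` preserves the congruence and the 1-norm, and for `k ≠ 0` it has no fixed
point in `Ω(U,k)`. Hence every `N_𝓛(k)` with `k ≥ 1` is even, and for odd `i` every index
`i - 2s` in the sum is odd, so each summand is even.
-/

theorem Set.even_ncard_of_involution {α : Type*} {s : Set α} (f : α → α)
    (hmaps : Set.MapsTo f s s) (hinv : ∀ x ∈ s, f (f x) = x) (hfix : ∀ x ∈ s, f x ≠ x) :
    Even s.ncard := by
  by_cases hs : s.Finite
  · have hprod : ∏ _x ∈ hs.toFinset, (-1 : ℤ) = 1 :=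
      Finset.prod_involution (fun x _ => f x) (fun _ _ => by norm_num)
        (fun x hx _ => hfix x (hs.mem_toFinset.mp hx))
        (fun x hx => hs.mem_toFinset.mpr (hmaps (hs.mem_toFinset.mp hx)))
        (fun x hx => hinv x (hs.mem_toFinset.mp hx))
    rw [Finset.prod_const, neg_one_pow_eq_one_iff_even (by norm_num)] at hprod
    rwa [Set.ncard_eq_toFinset_card _ hs]
  · rw [Set.Infinite.ncard hs]
    exact Even.zero

namespace OmegaSet

variable {p m : ℕ} {q : Fin m → ℤ} {U : Finset (Fin m)} {k : ℕ}

theorem neg_mem {x : Fin m → ℤ} (hx : x ∈ OmegaSet p q U k) : -x ∈ OmegaSet p q U k := by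
  obtain ⟨hsupp, hdvd, hnorm⟩ := hx
  refine ⟨fun i hi => by simp [hsupp i hi], ?_, by simpa using hnorm⟩
  simpa [Finset.sum_neg_distrib] using hdvd.neg_right

theorem zero_mem_iff : (0 : Fin m → ℤ) ∈ OmegaSet p q U k ↔ k = 0 := by
  simp [OmegaSet, eq_comm]

theorem even_ncard (hk : k ≠ 0) : Even (OmegaSet p q U k).ncard :=
  Set.even_ncard_of_involution Neg.neg (fun _ => neg_mem) (fun x _ => neg_neg x)
    fun _ hx hneg => hk (zero_mem_iff.mp (self_eq_neg.mp hneg.symm ▸ hx))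

end OmegaSet

theorem dim_eigenspace_even_general (p m : ℕ) (q : Fin m → ℤ) (i : ℕ) (hi : Odd i) :
    Even (∑ s ∈ Finset.range (i / 2 + 1),
      Nat.choose (s + m - 2) (m - 2) * (OmegaSet p q Finset.univ (i - 2 * s)).ncard) := by
  refine Finset.even_sum _ fun s hs => (OmegaSet.even_ncard ?_).mul_left _
  obtain ⟨j, rfl⟩ := hi
  have := Finset.mem_range.mp hs
  omega

/-- **Corollary.** If `p` is even and `m ≥ 2`, then for every odd `i ≥ 1` the number
`∑_{s=0}^{⌊i/2⌋} binom(s+m-2, m-2) ⬝ N_𝓛(i-2s)` (the multiplicity of the eigenvalue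
`λ_i = i(i+2m-2)` of the Laplace–Beltrami operator on `L(p;q₁,…,q_m)`) is even. -/
theorem dim_eigenspace_even (p m : ℕ) (hp : 1 ≤ p) (hm : 2 ≤ m) (hpe : Even p)
    (q : Fin m → ℤ) (hq : ∀ i, IsCoprime (q i) (p : ℤ))
    (i : ℕ) (hi : Odd i) (hi1 : 1 ≤ i) :
    Even (∑ s ∈ Finset.range (i / 2 + 1),
      Nat.choose (s + m - 2) (m - 2) * (OmegaSet p q Finset.univ (i - 2 * s)).ncard) :=
  dim_eigenspace_even_general p m q i hi
end
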